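/- No imaginary unit i_u of the 2^N-ions with a single-index (i.e., a pure basis unit) is a zero divisor: if i_u · x = 0 for some 2^N-ion x, then x = 0. -/

import Mathlib

noncomputable section

/-- Cayley-Dickson algebra of dimension `2^n` over `ℝ`, as iterated pairs. -/
@[reducible] def CD : ℕ → Type
  | 0 => ℝ
  | n+1 => CD n × CD n

def CDzero : (n : ℕ) → CD n
  | 0 => (0 : ℝ)
  | n+1 => (CDzero n, CDzero n)

def CDadd : (n : ℕ) → CD n → CD n → CD n
  | 0, x, y => ((x + y : ℝ) : CD 0)
  | n+1, x, y => ((CDadd n (x : CD (n+1)).1 (y : CD (n+1)).1,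
      CDadd n (x : CD (n+1)).2 (y : CD (n+1)).2) : CD (n+1))

def CDneg : (n : ℕ) → CD n → CD n
  | 0, x => ((-(x : ℝ) : ℝ) : CD 0)
  | n+1, x => (((CDneg n (x : CD (n+1)).1, CDneg n (x : CD (n+1)).2)) : CD (n+1))

def CDconj : (n : ℕ) → CD n → CD n
  | 0, x => x
  | n+1, x => (((CDconj n (x : CD (n+1)).1, CDneg n (x : CD (n+1)).2)) : CD (n+1))

/-- Cayley-Dickson multiplication: `(a,b)(c,d) = (ac - d* b, d a + b c*)`. -/
def CDmul : (n : ℕ) → CD n → CD n → CD n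
  | 0, x, y => ((x * y : ℝ) : CD 0)
  | n+1, x, y =>
      (((CDadd n (CDmul n (x : CD (n+1)).1 (y : CD (n+1)).1)
          (CDneg n (CDmul n (CDconj n (y : CD (n+1)).2) (x : CD (n+1)).2)),
        CDadd n (CDmul n (y : CD (n+1)).2 (x : CD (n+1)).1)
          (CDmul n (x : CD (n+1)).2 (CDconj n (y : CD (n+1)).1)))) : CD (n+1))

def CDsub (n : ℕ) (x y : CD n) : CD n := CDadd n x (CDneg n y)

def CDsmul : (n : ℕ) → ℝ → CD n → CD n
  | 0, c, x => ((c * x : ℝ) : CD 0)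
  | n+1, c, x => (((CDsmul n c (x : CD (n+1)).1, CDsmul n c (x : CD (n+1)).2)) : CD (n+1))

/-- The imaginary/basis unit `i_k` of the `2^n`-ions (`k < 2^n`); `i_0 = 1`. -/
def CDunit : (n : ℕ) → ℕ → CD n
  | 0, _ => ((1 : ℝ) : CD 0)
  | n+1, k =>
      if k < 2^n then (((CDunit n k, CDzero n)) : CD (n+1))
      else (((CDzero n, CDunit n (k - 2^n))) : CD (n+1))

/-- `(a,b,c)` is an associative triplet in cyclic positive order among the
indices of the `2^n`-ions. -/
def IsCPO (n : ℕ) (a b c : ℕ) : Prop :=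
  CDmul n (CDunit n a) (CDunit n b) = CDunit n c ∧
  CDmul n (CDunit n b) (CDunit n c) = CDunit n a ∧
  CDmul n (CDunit n c) (CDunit n a) = CDunit n b

/-! A basis unit of level `n + 1` is `(e, 0)` or `(0, e)` for a basis unit `e` of level `n`. By the
Cayley–Dickson formula, a product with such a pair is, componentwise, a product with `e` or with
its conjugate `±e` on one side or the other; so left and right multiplication by basis units kill
only `0`, simultaneously at every level, by induction. -/

lemma CDneg_zero : ∀ n : ℕ, CDneg n (CDzero n) = CDzero n
  | 0 => by simp [CDneg, CDzero]
  | n+1 => by simp [CDneg, CDzero, CDneg_zero n]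

lemma CDneg_neg : ∀ (n : ℕ) (x : CD n), CDneg n (CDneg n x) = x
  | 0, x => by simp [CDneg]
  | n+1, x => by simp [CDneg, CDneg_neg n]

lemma CDneg_eq_zero {n : ℕ} {x : CD n} (h : CDneg n x = CDzero n) : x = CDzero n := by
  rw [← CDneg_neg n x, h, CDneg_zero]

lemma CDneg_add : ∀ (n : ℕ) (x y : CD n),
    CDneg n (CDadd n x y) = CDadd n (CDneg n x) (CDneg n y)
  | 0, x, y => by simp only [CDneg, CDadd]; ring
  | n+1, x, y => by simp [CDneg, CDadd, CDneg_add n]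

lemma CDadd_zero : ∀ (n : ℕ) (x : CD n), CDadd n x (CDzero n) = x
  | 0, x => by simp [CDadd, CDzero]
  | n+1, x => by simp [CDadd, CDzero, CDadd_zero n]

lemma CDzero_add : ∀ (n : ℕ) (x : CD n), CDadd n (CDzero n) x = x
  | 0, x => by simp [CDadd, CDzero]
  | n+1, x => by simp [CDadd, CDzero, CDzero_add n]

lemma CDconj_zero : ∀ n : ℕ, CDconj n (CDzero n) = CDzero n
  | 0 => rfl
  | n+1 => by simp [CDconj, CDzero, CDconj_zero n, CDneg_zero n]

lemma CDconj_conj : ∀ (n : ℕ) (x : CD n), CDconj n (CDconj n x) = x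
  | 0, _ => rfl
  | n+1, x => by simp [CDconj, CDconj_conj n, CDneg_neg n]

lemma CDconj_eq_zero {n : ℕ} {x : CD n} (h : CDconj n x = CDzero n) : x = CDzero n := by
  rw [← CDconj_conj n x, h, CDconj_zero]

lemma CDconj_neg : ∀ (n : ℕ) (x : CD n), CDconj n (CDneg n x) = CDneg n (CDconj n x)
  | 0, _ => rfl
  | n+1, x => by simp [CDconj, CDneg, CDconj_neg n]

lemma CDmul_pair (n : ℕ) (a b c d : CD n) :
    CDmul (n+1) (a, b) (c, d) =
      (CDadd n (CDmul n a c) (CDneg n (CDmul n (CDconj n d) b)),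
        CDadd n (CDmul n d a) (CDmul n b (CDconj n c))) :=
  rfl

lemma CDzero_succ (n : ℕ) : CDzero (n+1) = (CDzero n, CDzero n) := rfl

lemma CDmul_zero_and_zero_mul : ∀ (n : ℕ) (x : CD n),
    CDmul n x (CDzero n) = CDzero n ∧ CDmul n (CDzero n) x = CDzero n
  | 0, x => by simp [CDmul, CDzero]
  | n+1, x => by
    have ih := CDmul_zero_and_zero_mul n
    simp [CDmul, CDzero, (ih _).1, (ih _).2, CDconj_zero n, CDneg_zero n, CDadd_zero n]

lemma CDmul_zero (n : ℕ) (x : CD n) : CDmul n x (CDzero n) = CDzero n :=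
  (CDmul_zero_and_zero_mul n x).1

lemma CDzero_mul (n : ℕ) (x : CD n) : CDmul n (CDzero n) x = CDzero n :=
  (CDmul_zero_and_zero_mul n x).2

lemma CDneg_mul_and_mul_neg : ∀ (n : ℕ) (x y : CD n),
    CDmul n (CDneg n x) y = CDneg n (CDmul n x y) ∧
    CDmul n x (CDneg n y) = CDneg n (CDmul n x y)
  | 0, x, y => by simp [CDmul, CDneg]
  | n+1, x, y => by
    have ih := CDneg_mul_and_mul_neg n
    constructor <;>
      simp [CDmul, CDneg, CDconj_neg n, (ih _ _).1, (ih _ _).2, CDneg_add n, CDneg_neg n]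

lemma CDneg_mul (n : ℕ) (x y : CD n) : CDmul n (CDneg n x) y = CDneg n (CDmul n x y) :=
  (CDneg_mul_and_mul_neg n x y).1

lemma CDmul_neg (n : ℕ) (x y : CD n) : CDmul n x (CDneg n y) = CDneg n (CDmul n x y) :=
  (CDneg_mul_and_mul_neg n x y).2

lemma CDconj_unit : ∀ (n k : ℕ),
    CDconj n (CDunit n k) = CDunit n k ∨ CDconj n (CDunit n k) = CDneg n (CDunit n k)
  | 0, _ => Or.inl rfl
  | n+1, k => by
    by_cases hk : k < 2 ^ n
    · rcases CDconj_unit n k with h | h <;> simp [CDunit, hk, CDconj, CDneg, h, CDneg_zero n]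
    · simp [CDunit, hk, CDconj, CDneg, CDconj_zero n, CDneg_zero n]

def CDRegular (n : ℕ) (a : CD n) : Prop :=
  (∀ x, CDmul n a x = CDzero n → x = CDzero n) ∧
    (∀ x, CDmul n x a = CDzero n → x = CDzero n)

lemma CDRegular.neg {n : ℕ} {a : CD n} (ha : CDRegular n a) : CDRegular n (CDneg n a) :=
  ⟨fun x hx => ha.1 x (CDneg_eq_zero (by rwa [← CDneg_mul])),
    fun x hx => ha.2 x (CDneg_eq_zero (by rwa [← CDmul_neg]))⟩

lemma CDRegular.conj_unit {n k : ℕ} (h : CDRegular n (CDunit n k)) :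
    CDRegular n (CDconj n (CDunit n k)) := by
  rcases CDconj_unit n k with hc | hc <;> rw [hc]
  exacts [h, h.neg]

lemma CDRegular.pair_zero {n : ℕ} {a : CD n} (ha : CDRegular n a)
    (hca : CDRegular n (CDconj n a)) : CDRegular (n+1) (a, CDzero n) := by
  constructor <;> rintro ⟨c, d⟩ h <;>
    simp only [CDmul_pair, CDzero_succ, CDconj_zero, CDmul_zero, CDzero_mul, CDneg_zero,
      CDadd_zero, CDzero_add, Prod.mk.injEq] at h ⊢
  · exact ⟨ha.1 c h.1, ha.2 d h.2⟩
  · exact ⟨ha.2 c h.1, hca.2 d h.2⟩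

lemma CDRegular.zero_pair {n : ℕ} {b : CD n} (hb : CDRegular n b)
    (hcb : CDRegular n (CDconj n b)) : CDRegular (n+1) (CDzero n, b) := by
  constructor <;> rintro ⟨c, d⟩ h <;>
    simp only [CDmul_pair, CDzero_succ, CDconj_zero, CDmul_zero, CDzero_mul, CDadd_zero,
      CDzero_add, Prod.mk.injEq] at h ⊢
  · exact ⟨CDconj_eq_zero (hb.1 _ h.2), CDconj_eq_zero (hb.2 _ (CDneg_eq_zero h.1))⟩
  · exact ⟨hb.1 c h.2, hcb.1 d (CDneg_eq_zero h.1)⟩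

lemma CDRegular_unit : ∀ n k : ℕ, CDRegular n (CDunit n k)
  | 0, _ => by constructor <;> intro _ h <;> simpa [CDmul, CDunit] using h
  | n+1, k => by
    have ih := CDRegular_unit n
    by_cases hk : k < 2 ^ n
    · simpa only [CDunit, hk, if_true] using (ih k).pair_zero (ih k).conj_unit
    · simpa only [CDunit, hk, if_false] using (ih _).zero_pair (ih _).conj_unit

theorem basis_unit_not_zero_divisor_general (N u : ℕ) :
    ∀ x : CD N, CDmul N (CDunit N u) x = CDzero N → x = CDzero N :=
  (CDRegular_unit N u).1

/-- No pure basis unit `i_u` of the `2^N`-ions is a zero divisor: if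
`i_u · x = 0` then `x = 0`. -/
theorem basis_unit_not_zero_divisor (N u : ℕ) (hu : u < 2 ^ N) :
    ∀ x : CD N, CDmul N (CDunit N u) x = CDzero N → x = CDzero N :=
  basis_unit_not_zero_divisor_general N u

end
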